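/- arXiv:2210.03495 — 4 statements merged into one kernel-verified Lean document; each statement's English description precedes it below -/
import Mathlib

section
/- Let k₀ > 0, T > 0, and let R : [0,T] → SO(3) be a continuously differentiable family of rotation matrices. Define κ(k₁,k₂) := √(k₀² − k₁² − k₂²) for k₁² + k₂² ≤ k₀², and let 𝒴 := { R_t (k₁,k₂,κ(k₁,k₂)−k₀)ᵀ : k₁² + k₂² ≤ k₀², t ∈ [0,T] } ⊆ ℝ³. Suppose the Lebesgue measure of 𝒴 is positive. If f, g ∈ L¹(ℝ³) both have support contained in the closed ball {x ∈ ℝ³ : ‖x‖₂ ≤ r_M} and their Fourier transforms agree at every point of 𝒴, then f = g almost everywhere. -/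
open MeasureTheory Matrix

/-- The 3D Fourier transform `𝓕f(k) = (2π)^{-3/2} ∫ f(x) e^{-i x·k} dx`. -/
noncomputable def fourier3 (f : EuclideanSpace ℝ (Fin 3) → ℂ)
    (k : EuclideanSpace ℝ (Fin 3)) : ℂ :=
  (((2 * Real.pi) ^ (-(3 : ℝ) / 2) : ℝ) : ℂ) *
    ∫ x : EuclideanSpace ℝ (Fin 3), f x * Complex.exp (-Complex.I * ((inner ℝ x k : ℝ) : ℂ))

/-- Interpret a plain vector in `Fin 3 → ℝ` as a point of Euclidean space `ℝ³`. -/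
noncomputable def toE3 (v : Fin 3 → ℝ) : EuclideanSpace ℝ (Fin 3) :=
  (WithLp.equiv 2 (Fin 3 → ℝ)).symm v

/-!
The Fourier transform of an integrable function `h` with bounded support is real-analytic along
every line: `t ↦ 𝓕 h (a + t • v)` is the restriction of the entire function
`z ↦ ∫ exp (-2πi ⟪x, v⟫ z) exp (-2πi ⟪x, a⟫) h x dx`. A continuous function on `ℝⁿ` which is
analytic in each coordinate separately and vanishes on a set of positive measure vanishes
identically (Fubini and induction on `n`, the case `n = 1` being the isolated zeros principle).
Applied to `h = f - g`, whose Fourier transform vanishes on a rescaled copy of `𝒴`, this gives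
`𝓕 h = 0`, and Fourier transforms are injective on `L¹`.
-/

open Set Filter Complex FourierTransform RealInnerProductSpace
open scoped ContDiff SchwartzMap Pointwise

theorem AnalyticOnNhd.eq_zero_of_eqOn_zero_of_measure_ne_zero {E : Type*}
    [NormedAddCommGroup E] [NormedSpace ℝ E] {μ : Measure ℝ} [NullSingletonClass μ] {φ : ℝ → E}
    (hφ : AnalyticOnNhd ℝ φ univ) {s : Set ℝ} (hs : μ s ≠ 0) (h0 : EqOn φ 0 s) : φ = 0 := by
  refine (hφ.eqOn_zero_or_eventually_ne_zero_of_preconnected isPreconnected_univ).elim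
    (fun h => funext fun t => h (mem_univ t)) fun h => absurd ?_ hs
  have hae : ∀ᵐ t ∂μ, φ t ≠ 0 := by
    have h' := ae_restrict_le_codiscreteWithin (μ := μ) MeasurableSet.univ h
    rwa [Measure.restrict_univ] at h'
  exact measure_mono_null (fun t ht => not_not.2 (h0 ht)) (ae_iff.1 hae)

theorem measure_setOf_measure_prodMk_preimage_ne_zero {α β : Type*} [MeasurableSpace α]
    [MeasurableSpace β] {μ : Measure α} {ν : Measure β} [SFinite ν] {s : Set (α × β)}
    (hs : MeasurableSet s) (h : μ.prod ν s ≠ 0) : μ {x | ν (Prod.mk x ⁻¹' s) ≠ 0} ≠ 0 := by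
  rwa [Ne, Measure.measure_prod_null hs, EventuallyEq, ae_iff] at h

theorem eq_zero_of_analyticOnNhd_update_of_eqOn_zero {E : Type*} [NormedAddCommGroup E]
    [NormedSpace ℝ E] : ∀ {n : ℕ} {G : (Fin n → ℝ) → E}, Continuous G →
    (∀ x i, AnalyticOnNhd ℝ (fun t => G (Function.update x i t)) univ) →
    ∀ {s : Set (Fin n → ℝ)}, volume s ≠ 0 → EqOn G 0 s → G = 0
  | 0, G, _, _, s, hs, h0 => by
    obtain ⟨x₀, hx₀⟩ := nonempty_of_measure_ne_zero hs
    exact funext fun x => Subsingleton.elim x x₀ ▸ h0 hx₀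
  | n + 1, G, hGc, hG, s, hs, h0 => by
    set Z : Set (ℝ × (Fin n → ℝ)) := {p | G (Fin.cons p.1 p.2) = 0}
    have hZ : MeasurableSet Z :=
      (isClosed_eq (hGc.comp (by fun_prop)) continuous_const).measurableSet
    have hZvol : volume Z ≠ 0 := by
      have hmp := volume_preserving_piFinSuccAbove (fun _ : Fin (n + 1) => ℝ) 0
      refine fun hZ0 => hs (measure_mono_null (fun x hx => ?_) (hmp.measure_preimage_equiv Z ▸ hZ0))
      simpa [Z] using h0 hx
    -- Fubini: the first coordinates `t` whose slice of `Z` has positive measure form a set `T` of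
    -- positive measure; for `t ∈ T` the induction hypothesis kills `G (Fin.cons t ·)`, and then
    -- analyticity in the first coordinate spreads the vanishing from `T` to all of `ℝ`.
    have hT := measure_setOf_measure_prodMk_preimage_ne_zero hZ (by rwa [← Measure.volume_eq_prod])
    have hslice : ∀ t, volume (Prod.mk t ⁻¹' Z) ≠ 0 → ∀ y, G (Fin.cons t y) = 0 := fun t ht =>
      congrFun <| eq_zero_of_analyticOnNhd_update_of_eqOn_zero (G := fun y => G (Fin.cons t y))
        (hGc.comp (by fun_prop)) (fun y i => by simpa only [Fin.cons_update] using hG _ i.succ)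
        ht fun y hy => hy
    funext x
    have hline : AnalyticOnNhd ℝ (fun t => G (Fin.cons t (Fin.tail x))) univ := by
      simpa only [Fin.update_cons_zero] using hG (Fin.cons 0 (Fin.tail x)) 0
    simpa using congrFun (hline.eq_zero_of_eqOn_zero_of_measure_ne_zero hT
      fun t ht => hslice t ht _) (x 0)

theorem eq_zero_of_analyticOnNhd_line_of_eqOn_zero {E V : Type*} [NormedAddCommGroup E]
    [NormedSpace ℝ E] [NormedAddCommGroup V] [InnerProductSpace ℝ V] [FiniteDimensional ℝ V]
    [MeasurableSpace V] [BorelSpace V] {G : V → E} (hGc : Continuous G)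
    (hG : ∀ a v, AnalyticOnNhd ℝ (fun t : ℝ => G (a + t • v)) univ) {s : Set V}
    (hs : volume s ≠ 0) (h0 : EqOn G 0 s) : G = 0 := by
  let ψ : (Fin _ → ℝ) ≃L[ℝ] V := (PiLp.continuousLinearEquiv 2 ℝ fun _ => ℝ).symm.trans
    (stdOrthonormalBasis ℝ V).repr.symm.toContinuousLinearEquiv
  have hψ : MeasurePreserving ψ := (stdOrthonormalBasis ℝ V).measurePreserving_repr_symm.comp
    (PiLp.volume_preserving_toLp _)
  have hline : ∀ x i (t : ℝ), ψ (Function.update x i t) =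
      ψ (x - Pi.single i (x i)) + t • ψ (Pi.single i 1) := by
    intro x i t
    rw [Pi.update_eq_sub_add_single, map_add, ← map_smul, ← Pi.single_smul', smul_eq_mul, mul_one]
  have hGψ : G ∘ ψ = 0 := eq_zero_of_analyticOnNhd_update_of_eqOn_zero (hGc.comp ψ.continuous)
    (fun x i => by simpa only [Function.comp_apply, hline] using hG _ _)
    (s := ψ ⁻¹' s)
    (by rwa [hψ.measure_preimage_emb ψ.toHomeomorph.measurableEmbedding s]) fun x hx => h0 hx
  ext x
  simpa using congrFun hGψ (ψ.symm x)

theorem differentiable_integral_cexp_mul_smul {α F : Type*} [MeasurableSpace α] {μ : Measure α}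
    [NormedAddCommGroup F] [NormedSpace ℂ F] [CompleteSpace F] {g : α → F} {c : α → ℂ}
    (hg : Integrable g μ) (hc : AEStronglyMeasurable c μ) {C : ℝ}
    (hC : ∀ x, g x ≠ 0 → ‖c x‖ ≤ C) :
    Differentiable ℂ fun z => ∫ x, cexp (c x * z) • g x ∂μ := by
  have hexp : ∀ x z, g x ≠ 0 → ‖cexp (c x * z)‖ ≤ Real.exp (C * ‖z‖) := fun x z hx => by
    rw [norm_exp]
    gcongr
    calc (c x * z).re ≤ ‖c x * z‖ := re_le_norm _
      _ ≤ C * ‖z‖ := by rw [norm_mul]; gcongr; exact hC x hx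
  have hmeas : ∀ z, AEStronglyMeasurable (fun x => cexp (c x * z) • g x) μ := fun z =>
    (continuous_exp.comp_aestronglyMeasurable (hc.mul_const z)).smul hg.aestronglyMeasurable
  intro z₀
  have hbound : ∀ x, ∀ z ∈ Metric.ball z₀ 1,
      ‖(cexp (c x * z) * c x) • g x‖ ≤ Real.exp (C * (‖z₀‖ + 1)) * C * ‖g x‖ := by
    intro x z hz
    by_cases hx : g x = 0
    · simp [hx]
    have hC0 : 0 ≤ C := (norm_nonneg _).trans (hC x hx)
    have hz' : ‖z‖ ≤ ‖z₀‖ + 1 := by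
      have := norm_le_norm_add_norm_sub' z z₀
      rw [mem_ball_iff_norm] at hz
      linarith
    rw [norm_smul, norm_mul]
    gcongr
    · exact (hexp x z hx).trans (by gcongr)
    · exact hC x hx
  have key := hasDerivAt_integral_of_dominated_loc_of_deriv_le (μ := μ)
    (F := fun z x => cexp (c x * z) • g x) (F' := fun z x => (cexp (c x * z) * c x) • g x)
    (Metric.ball_mem_nhds z₀ one_pos) (Eventually.of_forall hmeas)
    ((hg.norm.const_mul (Real.exp (C * ‖z₀‖))).mono' (hmeas z₀) (Eventually.of_forall fun x => ?_))
    (((continuous_exp.comp_aestronglyMeasurable (hc.mul_const z₀)).mul hc).smul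
      hg.aestronglyMeasurable)
    (Eventually.of_forall hbound) (hg.norm.const_mul _)
    (Eventually.of_forall fun x z _ => ?_)
  · exact key.2.differentiableAt
  · by_cases hx : g x = 0
    · simp [hx]
    rw [norm_smul]
    gcongr
    exact hexp x z₀ hx
  · simpa using ((hasDerivAt_id z).const_mul (c x)).cexp.smul_const (g x)

section Fourier

variable {V F : Type*} [NormedAddCommGroup V] [InnerProductSpace ℝ V] [MeasurableSpace V]
  [BorelSpace V] [FiniteDimensional ℝ V] [NormedAddCommGroup F] [NormedSpace ℂ F]

theorem Real.fourier_sub_apply {f g : V → F} (hf : Integrable f) (hg : Integrable g) (w : V) :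
    𝓕 (f - g) w = 𝓕 f w - 𝓕 g w := by
  simp only [Real.fourier_eq, Pi.sub_apply, smul_sub]
  exact integral_sub ((Real.fourierIntegral_convergent_iff w).2 hf)
    ((Real.fourierIntegral_convergent_iff w).2 hg)

variable [CompleteSpace F]

theorem Real.analyticOnNhd_fourier_line {f : V → F} (hf : Integrable f)
    (hsupp : Bornology.IsBounded (Function.support f)) (a v : V) :
    AnalyticOnNhd ℝ (fun t : ℝ => 𝓕 f (a + t • v)) univ := by
  obtain ⟨r, hr⟩ := hsupp.subset_closedBall 0
  let c : V → ℂ := fun x => (-2 * Real.pi * ⟪x, v⟫ : ℝ) * I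
  let g : V → F := fun x => cexp ((-(2 * Real.pi * ⟪x, a⟫) : ℝ) * I) • f x
  have hΦ : Differentiable ℂ fun z => ∫ x, cexp (c x * z) • g x :=
    differentiable_integral_cexp_mul_smul (C := 2 * Real.pi * (r * ‖v‖))
      (by simpa only [Circle.smul_def, Real.fourierChar_apply, mul_neg, neg_mul] using
        (Real.fourierIntegral_convergent_iff a).2 hf) (by fun_prop) fun x hx => by
        have hxr : ‖x‖ ≤ r := by simpa using hr (Function.mem_support.2 (right_ne_zero_of_smul hx))
        simp only [c, norm_mul, norm_real, norm_I, mul_one, Real.norm_eq_abs, abs_neg,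
          abs_two, abs_of_pos Real.pi_pos]
        gcongr
        exact (abs_real_inner_le_norm x v).trans (by gcongr)
  have hline : (fun t : ℝ => 𝓕 f (a + t • v)) = fun t : ℝ => ∫ x, cexp (c x * t) • g x := by
    ext t
    rw [Real.fourier_eq']
    congr 1; ext x
    rw [smul_smul, ← Complex.exp_add, inner_add_right, real_inner_smul_right]
    congr 2
    simp only [c]; push_cast; ring
  rw [hline]
  exact fun t _ => (hΦ.analyticAt t).restrictScalars.comp (ofRealCLM.analyticAt t)

theorem Real.ae_eq_zero_of_fourier_eq_zero {f : V → F} (hf : Integrable f) (h : 𝓕 f = 0) :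
    f =ᵐ[volume] 0 := by
  refine ae_eq_zero_of_integral_contDiff_smul_eq_zero hf.locallyIntegrable fun φ hφ hφs => ?_
  -- A test function `φ` is the Fourier transform of the Schwartz function `ψ = 𝓕⁻ φ`, and
  -- `∫ 𝓕 ψ • f = ∫ ψ • 𝓕 f = 0`.
  let ψ : 𝓢(V, ℂ) := (hφs.comp_left ofReal_zero).toSchwartzMap (ofRealCLM.contDiff.comp hφ)
  have hdual := VectorFourier.integral_fourierIntegral_smul_eq_flip (L := innerₗ V)
    Real.continuous_fourierChar continuous_inner ((𝓕⁻ ψ).integrable (μ := volume)) hf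
  rw [flip_innerₗ] at hdual
  change ∫ ξ, 𝓕 ((𝓕⁻ ψ : 𝓢(V, ℂ)) : V → ℂ) ξ • f ξ = ∫ x, (𝓕⁻ ψ) x • 𝓕 f x at hdual
  rw [← SchwartzMap.fourier_coe, FourierInvPair.fourier_fourierInv_eq, h] at hdual
  simp only [Pi.zero_apply, smul_zero, integral_zero] at hdual
  rw [← hdual]
  congr 1 with x

theorem Real.ae_eq_zero_of_fourier_eqOn_zero {f : V → F} (hf : Integrable f)
    (hsupp : Bornology.IsBounded (Function.support f)) {s : Set V} (hs : volume s ≠ 0)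
    (h0 : EqOn (𝓕 f) 0 s) : f =ᵐ[volume] 0 :=
  Real.ae_eq_zero_of_fourier_eq_zero hf <| eq_zero_of_analyticOnNhd_line_of_eqOn_zero
    (VectorFourier.fourierIntegral_continuous Real.continuous_fourierChar continuous_inner hf)
    (Real.analyticOnNhd_fourier_line hf hsupp) hs h0

end Fourier

theorem fourier3_eq_fourier (f : EuclideanSpace ℝ (Fin 3) → ℂ) (k : EuclideanSpace ℝ (Fin 3)) :
    fourier3 f k = (((2 * Real.pi) ^ (-(3 : ℝ) / 2) : ℝ) : ℂ) * 𝓕 f ((2 * Real.pi)⁻¹ • k) := by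
  rw [fourier3, Real.fourier_eq']
  congr 1
  refine integral_congr_ae (Eventually.of_forall fun x => ?_)
  dsimp only
  rw [smul_eq_mul, mul_comm, real_inner_smul_right]
  congr 2
  push_cast
  field_simp

theorem stmt1_general (rM : ℝ)
    (Y : Set (EuclideanSpace ℝ (Fin 3)))
    (hYpos : 0 < volume Y)
    (f g : EuclideanSpace ℝ (Fin 3) → ℂ)
    (hf : Integrable f) (hg : Integrable g)
    (hfsupp : Function.support f ⊆ Metric.closedBall 0 rM)
    (hgsupp : Function.support g ⊆ Metric.closedBall 0 rM)
    (hagree : ∀ y ∈ Y, fourier3 f y = fourier3 g y) :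
    f =ᵐ[volume] g := by
  have hsupp : Bornology.IsBounded (Function.support (f - g)) :=
    Metric.isBounded_closedBall.subset
      ((Function.support_sub f g).trans (union_subset hfsupp hgsupp))
  have hvol : volume ((2 * Real.pi)⁻¹ • Y) ≠ 0 := by
    rw [Measure.addHaar_smul]
    exact mul_ne_zero (by simp [Real.pi_ne_zero]) hYpos.ne'
  have h0 : EqOn (𝓕 (f - g)) 0 ((2 * Real.pi)⁻¹ • Y) := by
    rintro _ ⟨y, hy, rfl⟩
    have hc : (((2 * Real.pi) ^ (-(3 : ℝ) / 2) : ℝ) : ℂ) ≠ 0 :=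
      ofReal_ne_zero.2 (Real.rpow_pos_of_pos (by positivity) _).ne'
    have := hagree y hy
    rw [fourier3_eq_fourier, fourier3_eq_fourier, mul_right_inj' hc] at this
    rw [Real.fourier_sub_apply hf hg, this, sub_self, Pi.zero_apply]
  filter_upwards [Real.ae_eq_zero_of_fourier_eqOn_zero (hf.sub hg) hsupp hvol h0] with x hx
  exact sub_eq_zero.1 hx

theorem stmt1 (k₀ T rM : ℝ) (hk₀ : 0 < k₀) (hT : 0 < T)
    (R : ℝ → Matrix (Fin 3) (Fin 3) ℝ)
    -- each `R t` is a rotation matrix (element of SO(3))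
    (hRrot : ∀ t ∈ Set.Icc (0 : ℝ) T, (R t)ᵀ * R t = 1 ∧ (R t).det = 1)
    -- the family is continuously differentiable in `t`
    (hRdiff : ∀ i j, ContDiffOn ℝ 1 (fun t => R t i j) (Set.Icc (0 : ℝ) T))
    (Y : Set (EuclideanSpace ℝ (Fin 3)))
    (hY : Y = {y | ∃ t ∈ Set.Icc (0 : ℝ) T, ∃ k₁ k₂ : ℝ, k₁ ^ 2 + k₂ ^ 2 ≤ k₀ ^ 2 ∧
      y = toE3 (R t *ᵥ ![k₁, k₂, Real.sqrt (k₀ ^ 2 - k₁ ^ 2 - k₂ ^ 2) - k₀])})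
    (hYpos : 0 < volume Y)
    (f g : EuclideanSpace ℝ (Fin 3) → ℂ)
    (hf : Integrable f) (hg : Integrable g)
    (hfsupp : Function.support f ⊆ Metric.closedBall 0 rM)
    (hgsupp : Function.support g ⊆ Metric.closedBall 0 rM)
    (hagree : ∀ y ∈ Y, fourier3 f y = fourier3 g y) :
    f =ᵐ[volume] g :=
  stmt1_general rM Y hYpos f g hf hg hfsupp hgsupp hagree
end

section
/- (Area formula with multiplicity / Banach indicatrix.) Let n ≥ 1, let U ⊆ ℝⁿ be an open set, and let Φ : ℝⁿ → ℝⁿ be continuously differentiable on U. Then for every measurable function g : ℝⁿ → [0,∞], ∫_U g(Φ(z)) · |det DΦ(z)| dz = ∫_{ℝⁿ} g(y) · N(y) dy, where DΦ(z) is the Jacobian matrix of Φ at z and N(y) denotes the number of points in the preimage Φ⁻¹({y}) ∩ U (as a value in [0,∞], equal to ∞ if the preimage is infinite). -/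
/-!
Off the critical set `{x | det Φ'(x) = 0}` the inverse function theorem makes `Φ` locally
injective, so the regular part of `U` splits into countably many disjoint measurable pieces on
each of which the injective change of variables formula applies; summing over the pieces counts
every value `y` once per preimage. The critical set contributes nothing on the left because the
Jacobian vanishes there, and nothing on the right because its image is null (Sard's lemma in equal
dimension).
-/

open MeasureTheory ENNReal
open Set Filter Topology Function

theorem HasStrictFDerivAt.exists_mem_nhds_injOn {𝕜 E F : Type*} [NontriviallyNormedField 𝕜]
    [NormedAddCommGroup E] [NormedSpace 𝕜 E] [NormedAddCommGroup F] [NormedSpace 𝕜 F]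
    [CompleteSpace E] {f : E → F} {f' : E ≃L[𝕜] F} {a : E}
    (hf : HasStrictFDerivAt f (f' : E →L[𝕜] F) a) : ∃ t ∈ 𝓝 a, InjOn f t :=
  ⟨_, (hf.toOpenPartialHomeomorph f).open_source.mem_nhds hf.mem_toOpenPartialHomeomorph_source,
    (hf.toOpenPartialHomeomorph f).injOn⟩

theorem Set.encard_iUnion_of_pairwise_disjoint {ι α : Type*} [Countable ι] {s : ι → Set α}
    (hs : Pairwise (Disjoint on s)) :
    ((⋃ i, s i).encard : ℝ≥0∞) = ∑' i, ((s i).encard : ℝ≥0∞) := by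
  let _ : MeasurableSpace α := ⊤
  simp only [← Measure.count_apply (MeasurableSpace.measurableSet_top)]
  exact measure_iUnion hs fun _ => MeasurableSpace.measurableSet_top

theorem Set.InjOn.encard_preimage_singleton_inter {α β : Type*} {f : α → β} {s : Set α}
    (hf : InjOn f s) (y : β) :
    ((f ⁻¹' {y} ∩ s).encard : ℝ≥0∞) = (f '' s).indicator 1 y := by
  by_cases hy : y ∈ f '' s
  · obtain ⟨x, hxs, rfl⟩ := hy
    have : f ⁻¹' {f x} ∩ s = {x} :=
      Subset.antisymm (fun z hz => hf hz.2 hxs hz.1) (singleton_subset_iff.2 ⟨rfl, hxs⟩)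
    simp [this, mem_image_of_mem f hxs]
  · have : f ⁻¹' {y} ∩ s = ∅ := by
      ext z
      simp only [mem_inter_iff, mem_preimage, mem_singleton_iff, mem_empty_iff_false, iff_false]
      rintro ⟨rfl, hz⟩
      exact hy (mem_image_of_mem f hz)
    simp [this, hy]

theorem exists_pairwise_disjoint_measurableSet_injOn_cover {α β : Type*} [TopologicalSpace α]
    [SecondCountableTopology α] [MeasurableSpace α] [OpensMeasurableSpace α]
    {f : α → β} {s : Set α} (hs : MeasurableSet s) (hf : ∀ x ∈ s, ∃ t ∈ 𝓝 x, InjOn f t) :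
    ∃ W : ℕ → Set α, (∀ k, MeasurableSet (W k)) ∧ Pairwise (Disjoint on W) ∧
      ⋃ k, W k = s ∧ ∀ k, InjOn f (W k) := by
  rcases s.eq_empty_or_nonempty with rfl | hne
  · exact ⟨fun _ => ∅, fun _ => .empty, fun _ _ _ => disjoint_bot_left, iUnion_empty,
      fun _ => injOn_empty f⟩
  choose! t ht_nhds ht_inj using hf
  choose! u hut hu_open hxu using fun x hx => mem_nhds_iff.1 (ht_nhds x hx)
  obtain ⟨S, hSs, hS, hsS⟩ := TopologicalSpace.countable_cover_nhdsWithin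
    (fun x hx => mem_nhdsWithin_of_mem_nhds ((hu_open x hx).mem_nhds (hxu x hx)))
  have hSne : S.Nonempty := by
    obtain ⟨x, hx⟩ := hne
    obtain ⟨y, hy, -⟩ := mem_iUnion₂.1 (hsS hx)
    exact ⟨y, hy⟩
  obtain ⟨e, rfl⟩ := hS.exists_eq_range hSne
  set V : ℕ → Set α := fun k => s ∩ u (e k)
  have hV_cover : ⋃ k, V k = s := by
    refine Subset.antisymm (iUnion_subset fun k => inter_subset_left) fun x hx => ?_
    obtain ⟨_, ⟨k, rfl⟩, hxk⟩ := mem_iUnion₂.1 (hsS hx)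
    exact mem_iUnion.2 ⟨k, hx, hxk⟩
  refine ⟨disjointed V, .disjointed fun k => hs.inter (hu_open _ (hSs ⟨k, rfl⟩)).measurableSet,
    disjoint_disjointed V, by rw [iUnion_disjointed, hV_cover], fun k => ?_⟩
  exact (ht_inj _ (hSs ⟨k, rfl⟩)).mono
    ((disjointed_subset V k).trans (inter_subset_right.trans (hut _ (hSs ⟨k, rfl⟩))))

theorem tsum_setLIntegral_image_eq_lintegral_mul_encard {α β : Type*} [MeasurableSpace β]
    (ν : Measure β) {f : α → β} {W : ℕ → Set α} (hW : Pairwise (Disjoint on W))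
    (hf : ∀ k, InjOn f (W k)) (hfW : ∀ k, MeasurableSet (f '' W k)) {g : β → ℝ≥0∞}
    (hg : Measurable g) :
    ∑' k, ∫⁻ y in f '' W k, g y ∂ν = ∫⁻ y, g y * (f ⁻¹' {y} ∩ ⋃ k, W k).encard ∂ν := by
  have hcount (y : β) :
      ((f ⁻¹' {y} ∩ ⋃ k, W k).encard : ℝ≥0∞) = ∑' k, (f '' W k).indicator 1 y := by
    rw [inter_iUnion, encard_iUnion_of_pairwise_disjoint fun i j hij =>
      (hW hij).mono inter_subset_right inter_subset_right]
    exact tsum_congr fun k => (hf k).encard_preimage_singleton_inter y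
  calc ∑' k, ∫⁻ y in f '' W k, g y ∂ν
      = ∫⁻ y, ∑' k, (f '' W k).indicator g y ∂ν := by
        rw [lintegral_tsum fun k => (hg.indicator (hfW k)).aemeasurable]
        exact tsum_congr fun k => (lintegral_indicator (hfW k) g).symm
    _ = ∫⁻ y, g y * (f ⁻¹' {y} ∩ ⋃ k, W k).encard ∂ν := by
        refine lintegral_congr fun y => ?_
        rw [hcount, ← ENNReal.tsum_mul_left]
        refine tsum_congr fun k => ?_
        by_cases hy : y ∈ f '' W k <;> simp [hy]

theorem setLIntegral_comp_mul_abs_det_eq_lintegral_mul_encard {E : Type*} [NormedAddCommGroup E]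
    [NormedSpace ℝ E] [FiniteDimensional ℝ E] [MeasurableSpace E] [BorelSpace E]
    (μ : Measure E) [μ.IsAddHaarMeasure] {f : E → E} {f' : E → E →L[ℝ] E} {s : Set E}
    (hs : MeasurableSet s) (hf' : ∀ x ∈ s, HasFDerivWithinAt f (f' x) s x)
    (hf : ∀ x ∈ s, ∃ t ∈ 𝓝 x, InjOn f t) {g : E → ℝ≥0∞} (hg : Measurable g) :
    ∫⁻ x in s, g (f x) * ENNReal.ofReal |(f' x).det| ∂μ =
      ∫⁻ y, g y * (f ⁻¹' {y} ∩ s).encard ∂μ := by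
  obtain ⟨W, hW_meas, hW_disj, rfl, hW_inj⟩ :=
    exists_pairwise_disjoint_measurableSet_injOn_cover hs hf
  have hf'W (k : ℕ) : ∀ x ∈ W k, HasFDerivWithinAt f (f' x) (W k) x := fun x hx =>
    (hf' x (mem_iUnion_of_mem k hx)).mono (subset_iUnion W k)
  rw [← tsum_setLIntegral_image_eq_lintegral_mul_encard μ hW_disj hW_inj
    (fun k => measurable_image_of_fderivWithin (hW_meas k) (hf'W k) (hW_inj k)) hg,
    lintegral_iUnion hW_meas hW_disj]
  refine tsum_congr fun k => ?_
  rw [lintegral_image_eq_lintegral_abs_det_fderiv_mul μ (hW_meas k) (hf'W k) (hW_inj k)]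
  simp_rw [mul_comm]

section ContDiffOn

variable {E : Type*} [NormedAddCommGroup E] [NormedSpace ℝ E] {f : E → E} {U : Set E}

theorem ContDiffOn.isOpen_setOf_det_fderiv_ne_zero (hf : ContDiffOn ℝ 1 f U) (hU : IsOpen U) :
    IsOpen {x | x ∈ U ∧ (fderiv ℝ f x).det ≠ 0} :=
  (ContinuousLinearMap.continuous_det.comp_continuousOn
    (hf.continuousOn_fderiv_of_isOpen hU le_rfl)).isOpen_inter_preimage hU isOpen_compl_singleton

variable [FiniteDimensional ℝ E]

theorem ContDiffOn.exists_mem_nhds_injOn_of_det_fderiv_ne_zero (hf : ContDiffOn ℝ 1 f U)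
    (hU : IsOpen U) {x : E} (hxU : x ∈ U) (hx : (fderiv ℝ f x).det ≠ 0) :
    ∃ t ∈ 𝓝 x, InjOn f t := by
  have hstrict := (hf.contDiffAt (hU.mem_nhds hxU)).hasStrictFDerivAt one_ne_zero
  rw [← ContinuousLinearMap.coe_toContinuousLinearEquivOfDetNeZero _ hx] at hstrict
  exact hstrict.exists_mem_nhds_injOn

variable [MeasurableSpace E] [BorelSpace E] (μ : Measure E) [μ.IsAddHaarMeasure]

theorem ContDiffOn.setLIntegral_comp_mul_abs_det_fderiv_eq_lintegral_mul_encard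
    (hf : ContDiffOn ℝ 1 f U) (hU : IsOpen U) {g : E → ℝ≥0∞} (hg : Measurable g) :
    ∫⁻ x in U, g (f x) * ENNReal.ofReal |(fderiv ℝ f x).det| ∂μ =
      ∫⁻ y, g y * (f ⁻¹' {y} ∩ U).encard ∂μ := by
  set A := {x | x ∈ U ∧ (fderiv ℝ f x).det ≠ 0}
  have hA : IsOpen A := hf.isOpen_setOf_det_fderiv_ne_zero hU
  have hAU : A ⊆ U := fun x hx => hx.1
  have hf' (s : Set E) (hs : s ⊆ U) (x : E) (hx : x ∈ s) :
      HasFDerivWithinAt f (fderiv ℝ f x) s x :=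
    ((hf.differentiableOn one_ne_zero).differentiableAt (hU.mem_nhds (hs hx))).hasFDerivAt
      |>.hasFDerivWithinAt
  have hdet {x : E} (hx : x ∈ U \ A) : (fderiv ℝ f x).det = 0 :=
    not_not.1 fun h => hx.2 ⟨hx.1, h⟩
  have hcritical : μ (f '' (U \ A)) = 0 :=
    addHaar_image_eq_zero_of_det_fderivWithin_eq_zero μ (hf' _ sdiff_subset) fun x hx => hdet hx
  have hfiber : ∀ᵐ y ∂μ, f ⁻¹' {y} ∩ U = f ⁻¹' {y} ∩ A := by
    filter_upwards [measure_eq_zero_iff_ae_notMem.1 hcritical] with y hy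
    refine Subset.antisymm (fun z hz => ⟨hz.1, by_contra fun hzA => hy ⟨z, ⟨hz.2, hzA⟩, hz.1⟩⟩)
      (inter_subset_inter_right _ hAU)
  have hvanish : ∫⁻ x in U \ A, g (f x) * ENNReal.ofReal |(fderiv ℝ f x).det| ∂μ = 0 :=
    setLIntegral_eq_zero (hU.measurableSet.diff hA.measurableSet) fun x hx => by simp [hdet hx]
  calc ∫⁻ x in U, g (f x) * ENNReal.ofReal |(fderiv ℝ f x).det| ∂μ
      = ∫⁻ x in A, g (f x) * ENNReal.ofReal |(fderiv ℝ f x).det| ∂μ := by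
        rw [← union_sdiff_cancel hAU, lintegral_union (hU.measurableSet.diff hA.measurableSet)
          disjoint_sdiff_right, hvanish, add_zero]
    _ = ∫⁻ y, g y * (f ⁻¹' {y} ∩ A).encard ∂μ :=
        setLIntegral_comp_mul_abs_det_eq_lintegral_mul_encard μ hA.measurableSet (hf' A hAU)
          (fun x hx => hf.exists_mem_nhds_injOn_of_det_fderiv_ne_zero hU hx.1 hx.2) hg
    _ = ∫⁻ y, g y * (f ⁻¹' {y} ∩ U).encard ∂μ :=
        lintegral_congr_ae (hfiber.mono fun y hy => by simp only [hy])

end ContDiffOn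

theorem stmt8_general (n : ℕ)
    (U : Set (EuclideanSpace ℝ (Fin n))) (hU : IsOpen U)
    (Φ : EuclideanSpace ℝ (Fin n) → EuclideanSpace ℝ (Fin n))
    (hΦ : ContDiffOn ℝ 1 Φ U)
    (g : EuclideanSpace ℝ (Fin n) → ℝ≥0∞) (hg : Measurable g) :
    ∫⁻ z in U, g (Φ z) * ENNReal.ofReal |(fderiv ℝ Φ z).det| =
      ∫⁻ y, g y * ((Φ ⁻¹' {y} ∩ U).encard : ℝ≥0∞) :=
  hΦ.setLIntegral_comp_mul_abs_det_fderiv_eq_lintegral_mul_encard volume hU hg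

theorem stmt8 (n : ℕ) (hn : 1 ≤ n)
    (U : Set (EuclideanSpace ℝ (Fin n))) (hU : IsOpen U)
    (Φ : EuclideanSpace ℝ (Fin n) → EuclideanSpace ℝ (Fin n))
    (hΦ : ContDiffOn ℝ 1 Φ U)
    (g : EuclideanSpace ℝ (Fin n) → ℝ≥0∞) (hg : Measurable g) :
    ∫⁻ z in U, g (Φ z) * ENNReal.ofReal |(fderiv ℝ Φ z).det| =
      ∫⁻ y, g y * ((Φ ⁻¹' {y} ∩ U).encard : ℝ≥0∞) :=
  stmt8_general n U hU Φ hΦ g hg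
end

section
/- Let n ≥ 1, let U ⊆ ℝⁿ be an open set, and let Φ : ℝⁿ → ℝⁿ be continuously differentiable on U. Assume that for every z ∈ U the preimage Φ⁻¹({Φ(z)}) ∩ U is a finite set, and let N(z) ≥ 1 denote its cardinality. Let F : ℝⁿ → ℂ be such that F is integrable on the image Φ(U) and the function z ↦ F(Φ(z)) · |det DΦ(z)| / N(z) is integrable on U. Then for every x ∈ ℝⁿ, ∫_{Φ(U)} F(y) e^{i x·y} dy = ∫_U e^{i Φ(z)·x} F(Φ(z)) · |det DΦ(z)| / N(z) dz. -/
/-!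
Off the critical set `{det DΦ = 0}`, whose image is Lebesgue-null, `Φ` is a local
diffeomorphism, so `U` minus the critical set is a countable disjoint union of measurable pieces on
each of which `Φ` is injective. The injective change of variables formula on each piece, summed
over the pieces, gives the Banach indicatrix identity
`∫ N(y) g(y) dy = ∫_U |det DΦ(z)| g(Φ z) dz` with `N(y) = #(Φ⁻¹{y} ∩ U)`. Taking
`g(y) = F(y) e^{i x·y} / N(y)` gives the theorem, since `N ≥ 1` on `Φ(U)` when the fibres
are finite.
-/

open MeasureTheory Set Function

theorem IsSigmaCompact.measurableSet {X : Type*} [TopologicalSpace X] [T2Space X]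
    [MeasurableSpace X] [OpensMeasurableSpace X] {s : Set X} (hs : IsSigmaCompact s) :
    MeasurableSet s := by
  obtain ⟨K, hK, rfl⟩ := hs
  exact .iUnion fun n => (hK n).measurableSet

theorem IsOpen.isSigmaCompact {X : Type*} [TopologicalSpace X] [LocallyCompactSpace X]
    [SecondCountableTopology X] {s : Set X} (hs : IsOpen s) : IsSigmaCompact s :=
  have := hs.locallyCompactSpace
  isSigmaCompact_iff_sigmaCompactSpace.2 inferInstance

theorem ContDiffAt.exists_isOpen_injOn_of_det_fderiv_ne_zero {𝕜 E : Type*} [RCLike 𝕜]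
    [NormedAddCommGroup E] [NormedSpace 𝕜 E] [FiniteDimensional 𝕜 E] {f : E → E} {z : E}
    (hf : ContDiffAt 𝕜 1 f z) (hdet : (fderiv 𝕜 f z).det ≠ 0) :
    ∃ t, IsOpen t ∧ z ∈ t ∧ InjOn f t := by
  have := FiniteDimensional.complete 𝕜 E
  have hs : HasStrictFDerivAt f
      ((fderiv 𝕜 f z).toContinuousLinearEquivOfDetNeZero hdet : E →L[𝕜] E) z := by
    rw [ContinuousLinearMap.coe_toContinuousLinearEquivOfDetNeZero]
    exact hf.hasStrictFDerivAt one_ne_zero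
  refine ⟨_, (hs.toOpenPartialHomeomorph f).open_source, hs.mem_toOpenPartialHomeomorph_source,
    ?_⟩
  simpa only [hs.toOpenPartialHomeomorph_coe] using (hs.toOpenPartialHomeomorph f).injOn

theorem IsOpen.exists_disjoint_measurableSet_injOn_cover {X Y : Type*} [TopologicalSpace X]
    [SecondCountableTopology X] [MeasurableSpace X] [OpensMeasurableSpace X] {f : X → Y}
    {V : Set X} (hV : IsOpen V) (hloc : ∀ z ∈ V, ∃ t, IsOpen t ∧ z ∈ t ∧ InjOn f t) :
    ∃ A : ℕ → Set X, (∀ k, MeasurableSet (A k)) ∧ Pairwise (Disjoint on A) ∧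
      (∀ k, InjOn f (A k)) ∧ ⋃ k, A k = V := by
  choose! t ht_open ht_mem ht_inj using hloc
  obtain ⟨T, hTV, hT, hVT⟩ := TopologicalSpace.countable_cover_nhdsWithin (s := V)
    (f := fun z => V ∩ t z) fun z hz =>
      inter_mem_nhdsWithin V ((ht_open z hz).mem_nhds (ht_mem z hz))
  have : Countable T := hT.to_subtype
  -- `Option T` is a nonempty countable index set even when `V = ∅`
  obtain ⟨e, he⟩ := exists_surjective_nat (Option T)
  let B : Option T → Set X := fun o => o.elim ∅ fun z => V ∩ t z
  have hB_open : ∀ k, IsOpen (B (e k)) := fun k => by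
    rcases e k with _ | z
    exacts [isOpen_empty, hV.inter (ht_open z (hTV z.2))]
  have hB_inj : ∀ k, InjOn f (B (e k)) := fun k => by
    rcases e k with _ | z
    exacts [injOn_empty f, (ht_inj z (hTV z.2)).mono inter_subset_right]
  have hB_union : ⋃ k, B (e k) = V := by
    rw [he.iUnion_comp B, iUnion_option]
    refine (empty_union _).trans (subset_antisymm (iUnion_subset fun _ => inter_subset_left) ?_)
    intro w hw
    obtain ⟨z, hz, hwz⟩ := mem_iUnion₂.1 (hVT hw)
    exact mem_iUnion.2 ⟨⟨z, hz⟩, hwz⟩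
  exact ⟨disjointed (B ∘ e), .disjointed fun k => (hB_open k).measurableSet,
    disjoint_disjointed _, fun k => (hB_inj k).mono (disjointed_subset _ k),
    iUnion_disjointed.trans hB_union⟩

/-- For an infinite fibre both sides are junk `0`: `ncard` of an infinite set, and the sum of
infinitely many copies of `g y`. -/
theorem tsum_indicator_image_eq_ncard_preimage_smul {ι X Y M : Type*} [AddCommGroup M]
    [TopologicalSpace M] [IsTopologicalAddGroup M] [T2Space M] {f : X → Y} {A : ι → Set X}
    (hA : Pairwise (Disjoint on A)) (hinj : ∀ k, InjOn f (A k)) (g : Y → M) (y : Y) :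
    ∑' k, (f '' A k).indicator g y = (f ⁻¹' {y} ∩ ⋃ k, A k).ncard • g y := by
  have hsum : ∑' k, (f '' A k).indicator g y = {k | y ∈ f '' A k}.ncard • g y := by
    rw [← Nat.card_coe_set_eq, ← tsum_const, tsum_subtype _ fun _ => g y]
    rfl
  rw [hsum, Set.ncard_congr fun w (hw : w ∈ f ⁻¹' {y} ∩ ⋃ k, A k) =>
    (mem_iUnion.1 hw.2).choose]
  · exact fun w hw => ⟨w, (mem_iUnion.1 hw.2).choose_spec, hw.1⟩
  · intro w w' hw hw' hk
    have hw'k := (mem_iUnion.1 hw'.2).choose_spec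
    rw [← hk] at hw'k
    exact hinj _ (mem_iUnion.1 hw.2).choose_spec hw'k (hw.1.trans hw'.1.symm)
  · rintro k ⟨w, hwk, rfl⟩
    have hw : w ∈ f ⁻¹' {f w} ∩ ⋃ k, A k := ⟨rfl, mem_iUnion.2 ⟨k, hwk⟩⟩
    refine ⟨w, hw, ?_⟩
    by_contra hne
    exact (hA hne).le_bot ⟨(mem_iUnion.1 hw.2).choose_spec, hwk⟩

section AreaFormula

variable {E G : Type*} [NormedAddCommGroup E] [NormedSpace ℝ E] [FiniteDimensional ℝ E]
  [MeasurableSpace E] [BorelSpace E] (μ : Measure E) [μ.IsAddHaarMeasure]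
  [NormedAddCommGroup G] [NormedSpace ℝ G]

theorem integral_ncard_preimage_smul_eq_of_injOn_cover {ι : Type*} [Countable ι] {f : E → E}
    {f' : E → E →L[ℝ] E} {A : ι → Set E} (hA_meas : ∀ k, MeasurableSet (A k))
    (hA : Pairwise (Disjoint on A))
    (hf' : ∀ k, ∀ z ∈ A k, HasFDerivWithinAt f (f' z) (A k) z) (hinj : ∀ k, InjOn f (A k))
    (g : E → G) (hint : IntegrableOn (fun z => |(f' z).det| • g (f z)) (⋃ k, A k) μ) :
    ∫ y, (f ⁻¹' {y} ∩ ⋃ k, A k).ncard • g y ∂μ =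
      ∫ z in ⋃ k, A k, |(f' z).det| • g (f z) ∂μ := by
  have himage_meas : ∀ k, MeasurableSet (f '' A k) := fun k =>
    measurable_image_of_fderivWithin (hA_meas k) (hf' k) (hinj k)
  have hint_image : ∀ k, IntegrableOn g (f '' A k) μ := fun k =>
    (integrableOn_image_iff_integrableOn_abs_det_fderiv_smul μ (hA_meas k) (hf' k) (hinj k)
      g).2 (hint.mono_set (subset_iUnion A k))
  have hlintegral : ∀ k, ∫⁻ y, ‖(f '' A k).indicator g y‖ₑ ∂μ =
      ∫⁻ z in A k, ‖|(f' z).det| • g (f z)‖ₑ ∂μ := fun k => by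
    simp_rw [enorm_indicator_eq_indicator_enorm, lintegral_indicator (himage_meas k),
      lintegral_image_eq_lintegral_abs_det_fderiv_mul μ (hA_meas k) (hf' k) (hinj k),
      enorm_smul, Real.enorm_eq_ofReal_abs, abs_abs]
  have hsummable : ∑' k, ∫⁻ y, ‖(f '' A k).indicator g y‖ₑ ∂μ ≠ ⊤ := by
    simp_rw [hlintegral, ← lintegral_iUnion hA_meas hA]
    exact hint.2.ne
  calc ∫ y, (f ⁻¹' {y} ∩ ⋃ k, A k).ncard • g y ∂μ
      = ∫ y, ∑' k, (f '' A k).indicator g y ∂μ := by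
        simp_rw [tsum_indicator_image_eq_ncard_preimage_smul hA hinj]
    _ = ∑' k, ∫ y, (f '' A k).indicator g y ∂μ :=
        integral_tsum (fun k => ((hint_image k).integrable_indicator (himage_meas k)).1)
          hsummable
    _ = ∑' k, ∫ z in A k, |(f' z).det| • g (f z) ∂μ := by
        simp_rw [integral_indicator (himage_meas _),
          integral_image_eq_integral_abs_det_fderiv_smul μ (hA_meas _) (hf' _) (hinj _)]
    _ = ∫ z in ⋃ k, A k, |(f' z).det| • g (f z) ∂μ := (integral_iUnion hA_meas hA hint).symm

theorem integral_ncard_preimage_smul_eq_setIntegral_abs_det_fderiv_smul {Φ : E → E}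
    {U : Set E} (hU : IsOpen U) (hΦ : ContDiffOn ℝ 1 Φ U) (g : E → G)
    (hint : IntegrableOn (fun z => |(fderiv ℝ Φ z).det| • g (Φ z)) U μ) :
    ∫ y, (Φ ⁻¹' {y} ∩ U).ncard • g y ∂μ = ∫ z in U, |(fderiv ℝ Φ z).det| • g (Φ z) ∂μ := by
  set V := U ∩ {z | (fderiv ℝ Φ z).det ≠ 0}
  have hdiff : ∀ z ∈ U, HasFDerivAt Φ (fderiv ℝ Φ z) z := fun z hz =>
    ((hΦ.contDiffAt (hU.mem_nhds hz)).differentiableAt one_ne_zero).hasFDerivAt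
  have hV : IsOpen V :=
    (ContinuousLinearMap.continuous_det.comp_continuousOn
      (hΦ.continuousOn_fderiv_of_isOpen hU le_rfl)).isOpen_inter_preimage hU
      isOpen_compl_singleton
  have hdet : ∀ z ∈ U \ V, (fderiv ℝ Φ z).det = 0 := fun z hz => by
    by_contra h
    exact hz.2 ⟨hz.1, h⟩
  have hcrit : μ (Φ '' (U \ V)) = 0 := addHaar_image_eq_zero_of_det_fderivWithin_eq_zero μ
    (fun z hz => (hdiff z hz.1).hasFDerivWithinAt) hdet
  obtain ⟨A, hA_meas, hA, hinj, hAV⟩ :=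
    hV.exists_disjoint_measurableSet_injOn_cover fun z hz =>
      (hΦ.contDiffAt (hU.mem_nhds hz.1)).exists_isOpen_injOn_of_det_fderiv_ne_zero hz.2
  have hAU : ∀ k, A k ⊆ U := fun k => (subset_iUnion A k).trans (hAV ▸ inter_subset_left)
  have hV_formula := integral_ncard_preimage_smul_eq_of_injOn_cover μ hA_meas hA
    (fun k z hz => (hdiff z (hAU k hz)).hasFDerivWithinAt) hinj g
    (hAV ▸ hint.mono_set inter_subset_left)
  rw [hAV] at hV_formula
  have hfiber : ∀ᵐ y ∂μ, Φ ⁻¹' {y} ∩ U = Φ ⁻¹' {y} ∩ V := by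
    filter_upwards [measure_eq_zero_iff_ae_notMem.1 hcrit] with y hy
    refine subset_antisymm (fun z hz => ⟨hz.1, ?_⟩)
      (inter_subset_inter_right _ inter_subset_left)
    by_contra hzV
    exact hy ⟨z, ⟨hz.2, hzV⟩, hz.1⟩
  rw [integral_congr_ae (hfiber.mono fun y hy => by rw [hy]), hV_formula]
  refine (setIntegral_eq_of_subset_of_forall_sdiff_eq_zero hU.measurableSet inter_subset_left
    fun z hz => ?_).symm
  rw [hdet z hz, abs_zero, zero_smul]

theorem setIntegral_image_eq_setIntegral_abs_det_fderiv_div_ncard_smul {Φ : E → E}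
    {U : Set E} (hU : IsOpen U) (hΦ : ContDiffOn ℝ 1 Φ U) (hfin : ∀ z ∈ U, (Φ ⁻¹' {Φ z} ∩ U).Finite)
    (f : E → G) (hint : IntegrableOn (fun z =>
      (|(fderiv ℝ Φ z).det| / ((Φ ⁻¹' {Φ z} ∩ U).ncard : ℝ)) • f (Φ z)) U μ) :
    ∫ y in Φ '' U, f y ∂μ =
      ∫ z in U, (|(fderiv ℝ Φ z).det| / ((Φ ⁻¹' {Φ z} ∩ U).ncard : ℝ)) • f (Φ z) ∂μ := by
  set N : E → ℝ := fun y => (Φ ⁻¹' {y} ∩ U).ncard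
  have hN : ∀ y ∈ Φ '' U, N y ≠ 0 := by
    rintro _ ⟨z, hz, rfl⟩
    exact Nat.cast_ne_zero.2 ((Set.ncard_pos (hfin z hz)).2 ⟨z, rfl, hz⟩).ne'
  have hmultiplicity :
      ∀ y, (Φ '' U).indicator f y = (Φ ⁻¹' {y} ∩ U).ncard • (N y)⁻¹ • f y := by
    intro y
    by_cases hy : y ∈ Φ '' U
    · rw [indicator_of_mem hy, ← Nat.cast_smul_eq_nsmul ℝ, smul_smul,
        mul_inv_cancel₀ (hN y hy), one_smul]
    · have hempty : Φ ⁻¹' {y} ∩ U = ∅ :=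
        eq_empty_of_forall_notMem fun z hz => hy ⟨z, hz.2, hz.1⟩
      rw [indicator_of_notMem hy, hempty, ncard_empty, zero_smul]
  have hU_image : MeasurableSet (Φ '' U) :=
    (hU.isSigmaCompact.image_of_continuousOn hΦ.continuousOn).measurableSet
  simp_rw [div_eq_mul_inv, ← smul_smul] at hint ⊢
  rw [← integral_indicator hU_image, funext hmultiplicity,
    integral_ncard_preimage_smul_eq_setIntegral_abs_det_fderiv_smul μ hU hΦ _ hint]

end AreaFormula

theorem stmt9_general (n : ℕ)
    (U : Set (EuclideanSpace ℝ (Fin n))) (hU : IsOpen U)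
    (Φ : EuclideanSpace ℝ (Fin n) → EuclideanSpace ℝ (Fin n))
    (hΦ : ContDiffOn ℝ 1 Φ U)
    (hfin : ∀ z ∈ U, (Φ ⁻¹' {Φ z} ∩ U).Finite)
    (F : EuclideanSpace ℝ (Fin n) → ℂ)
    (hint : IntegrableOn (fun z =>
      F (Φ z) * ((|(fderiv ℝ Φ z).det| / ((Φ ⁻¹' {Φ z} ∩ U).ncard : ℝ) : ℝ) : ℂ)) U)
    (x : EuclideanSpace ℝ (Fin n)) :
    ∫ y in Φ '' U, F y * Complex.exp (Complex.I * ((inner ℝ x y : ℝ) : ℂ)) =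
      ∫ z in U, Complex.exp (Complex.I * ((inner ℝ (Φ z) x : ℝ) : ℂ)) * F (Φ z) *
        ((|(fderiv ℝ Φ z).det| / ((Φ ⁻¹' {Φ z} ∩ U).ncard : ℝ) : ℝ) : ℂ) := by
  set χ : EuclideanSpace ℝ (Fin n) → ℂ :=
    fun y => Complex.exp (Complex.I * ((inner ℝ x y : ℝ) : ℂ))
  have hχ_cont : Continuous χ := by fun_prop
  have hχ_norm : ∀ y, ‖χ y‖ = 1 := fun y => by
    simp only [χ, mul_comm Complex.I, Complex.norm_exp_ofReal_mul_I]
  have hint_χ : IntegrableOn (fun z =>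
      (|(fderiv ℝ Φ z).det| / ((Φ ⁻¹' {Φ z} ∩ U).ncard : ℝ)) • (F (Φ z) * χ (Φ z))) U := by
    refine (hint.bdd_mul ((hχ_cont.comp_continuousOn hΦ.continuousOn).aestronglyMeasurable
      hU.measurableSet) (c := 1) (.of_forall fun z => (hχ_norm (Φ z)).le)).congr
      (.of_forall fun z => ?_)
    simp only [comp_apply, Complex.real_smul]
    ring
  rw [setIntegral_image_eq_setIntegral_abs_det_fderiv_div_ncard_smul volume hU hΦ hfin
    (fun y => F y * χ y) hint_χ]
  refine setIntegral_congr_fun hU.measurableSet fun z _ => ?_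
  simp only [χ, Complex.real_smul, real_inner_comm (Φ z) x]
  ring

theorem stmt9 (n : ℕ) (hn : 1 ≤ n)
    (U : Set (EuclideanSpace ℝ (Fin n))) (hU : IsOpen U)
    (Φ : EuclideanSpace ℝ (Fin n) → EuclideanSpace ℝ (Fin n))
    (hΦ : ContDiffOn ℝ 1 Φ U)
    (hfin : ∀ z ∈ U, (Φ ⁻¹' {Φ z} ∩ U).Finite)
    (hcard : ∀ z ∈ U, 1 ≤ (Φ ⁻¹' {Φ z} ∩ U).ncard)
    (F : EuclideanSpace ℝ (Fin n) → ℂ)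
    (hF : IntegrableOn F (Φ '' U))
    (hint : IntegrableOn (fun z =>
      F (Φ z) * ((|(fderiv ℝ Φ z).det| / ((Φ ⁻¹' {Φ z} ∩ U).ncard : ℝ) : ℝ) : ℂ)) U)
    (x : EuclideanSpace ℝ (Fin n)) :
    ∫ y in Φ '' U, F y * Complex.exp (Complex.I * ((inner ℝ x y : ℝ) : ℂ)) =
      ∫ z in U, Complex.exp (Complex.I * ((inner ℝ (Φ z) x : ℝ) : ℂ)) * F (Φ z) *
        ((|(fderiv ℝ Φ z).det| / ((Φ ⁻¹' {Φ z} ∩ U).ncard : ℝ) : ℝ) : ℂ) :=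
  stmt9_general n U hU Φ hΦ hfin F hint x
end

section
/- (Filtered backpropagation in k-space for a moving rotation axis.) Let k₀ > 0, T > 0, let α : [0,T] → ℝ and n : [0,T] → ℝ³ with ‖n(t)‖₂ = 1 be continuously differentiable, and let R(t) ∈ SO(3) be the Rodrigues rotation matrix with axis n(t) and angle α(t). Define κ(k₁,k₂) := √(k₀² − k₁² − k₂²), the open set 𝒰 := {(k₁,k₂,t) : k₁² + k₂² < k₀², 0 < t < T} ⊆ ℝ³, and Φ : 𝒰 → ℝ³, Φ(k₁,k₂,t) := R(t)(k₁, k₂, κ(k₁,k₂) − k₀)ᵀ. Assume that for every z ∈ 𝒰 the preimage Φ⁻¹({Φ(z)}) ∩ 𝒰 is finite with cardinality N(z). Let f ∈ L¹(ℝ³) and assume 𝓕f is integrable on 𝒴 := Φ(𝒰) and that z ↦ 𝓕f(Φ(z)) |det DΦ(z)| / N(z) is integrable on 𝒰. Then for every x ∈ ℝ³ the backpropagation f_bp(x) := ∫_𝒴 𝓕f(y) e^{i x·y} dy satisfies f_bp(x) = ∫_𝒰 e^{i Φ(k₁,k₂,t)·x} 𝓕f(Φ(k₁,k₂,t)) ·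 |det DΦ(k₁,k₂,t)| / N(k₁,k₂,t) d(k₁,k₂,t). -/
/-!
Off the critical set of `Φ`, whose image is null by Sard's theorem, the inverse function theorem
covers the parameter domain by countably many disjoint measurable pieces on each of which `Φ` is
injective. The injective change of variables formula holds on each piece, and summing over the
pieces counts a regular value `y` once for each of its `N(y)` preimages, which the weight `1 / N`
cancels.
-/

open MeasureTheory Matrix

/-- The Rodrigues rotation matrix with axis `n` and angle `α`. -/
noncomputable def rodrigues (n : Fin 3 → ℝ) (α : ℝ) : Matrix (Fin 3) (Fin 3) ℝ :=
  let c := Real.cos α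
  let s := Real.sin α
  !![(n 0) ^ 2 * (1 - c) + c, n 0 * n 1 * (1 - c) - n 2 * s, n 0 * n 2 * (1 - c) + n 1 * s;
     n 0 * n 1 * (1 - c) + n 2 * s, (n 1) ^ 2 * (1 - c) + c, n 1 * n 2 * (1 - c) - n 0 * s;
     n 0 * n 2 * (1 - c) - n 1 * s, n 1 * n 2 * (1 - c) + n 0 * s, (n 2) ^ 2 * (1 - c) + c]

open Set Function

section Counting

variable {X Y F : Type*} [AddCommGroup F] [TopologicalSpace F] [IsTopologicalAddGroup F] [T2Space F]

theorem ncard_setOf_mem_image_eq_ncard_preimage_inter_iUnion {ι : Type*} {Φ : X → Y}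
    {W : ι → Set X} (hW : Pairwise (Disjoint on W)) (hinj : ∀ n, InjOn Φ (W n)) (y : Y) :
    {n | y ∈ Φ '' W n}.ncard = (Φ ⁻¹' {y} ∩ ⋃ n, W n).ncard := by
  refine ncard_congr (fun n hn => hn.choose) (fun n hn => ?_) (fun n m hn hm hnm => ?_) ?_
  · exact ⟨hn.choose_spec.2, mem_iUnion.2 ⟨n, hn.choose_spec.1⟩⟩
  · by_contra hne
    exact disjoint_left.1 (hW hne) hn.choose_spec.1 (hnm ▸ hm.choose_spec.1)
  · rintro z ⟨hzy, hz⟩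
    obtain ⟨n, hzn⟩ := mem_iUnion.1 hz
    have hn : y ∈ Φ '' W n := ⟨z, hzn, hzy⟩
    exact ⟨n, hn, hinj n hn.choose_spec.1 hzn (hn.choose_spec.2.trans hzy.symm)⟩

theorem tsum_indicator_image_eq_ncard_smul {ι : Type*} {Φ : X → Y} {W : ι → Set X}
    (hW : Pairwise (Disjoint on W)) (hinj : ∀ n, InjOn Φ (W n)) (h : Y → F) (y : Y) :
    ∑' n, (Φ '' W n).indicator h y = (Φ ⁻¹' {y} ∩ ⋃ n, W n).ncard • h y := by
  have hind : ∀ n, (Φ '' W n).indicator h y = {n | y ∈ Φ '' W n}.indicator (fun _ => h y) n :=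
    fun n => by
      by_cases hn : y ∈ Φ '' W n
      · rw [indicator_of_mem hn, indicator_of_mem (by exact hn)]
      · rw [indicator_of_notMem hn, indicator_of_notMem (by exact hn)]
  rw [tsum_congr hind, ← tsum_subtype, tsum_const, Nat.card_coe_set_eq,
    ncard_setOf_mem_image_eq_ncard_preimage_inter_iUnion hW hinj]

theorem tsum_indicator_image_inv_ncard_smul [Module ℝ F] {ι : Type*} {Φ : X → Y} {U : Set X}
    {W : ι → Set X} (hW : Pairwise (Disjoint on W)) (hinj : ∀ n, InjOn Φ (W n)) (hWU : ∀ n, W n ⊆ U)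
    (hfin : ∀ z ∈ U, (Φ ⁻¹' {Φ z} ∩ U).Finite) (g : Y → F) {y : Y}
    (hfib : Φ ⁻¹' {y} ∩ U ⊆ ⋃ n, W n) :
    ∑' n, (Φ '' W n).indicator (fun y => ((Φ ⁻¹' {y} ∩ U).ncard : ℝ)⁻¹ • g y) y =
      (Φ '' U).indicator g y := by
  have hfiber : Φ ⁻¹' {y} ∩ ⋃ n, W n = Φ ⁻¹' {y} ∩ U :=
    (inter_subset_inter_right _ (iUnion_subset hWU)).antisymm (subset_inter inter_subset_left hfib)
  rw [tsum_indicator_image_eq_ncard_smul hW hinj, hfiber]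
  by_cases hy : y ∈ Φ '' U
  · obtain ⟨z, hz, rfl⟩ := hy
    have hN : ((Φ ⁻¹' {Φ z} ∩ U).ncard : ℝ) ≠ 0 :=
      Nat.cast_ne_zero.2 ((ncard_pos (hfin z hz)).2 ⟨z, rfl, hz⟩).ne'
    rw [indicator_of_mem (mem_image_of_mem Φ hz), ← Nat.cast_smul_eq_nsmul ℝ, smul_inv_smul₀ hN]
  · have hempty : Φ ⁻¹' {y} ∩ U = ∅ := eq_empty_of_forall_notMem fun z hz => hy ⟨z, hz.2, hz.1⟩
    rw [indicator_of_notMem hy, hempty, ncard_empty, zero_smul]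

end Counting

theorem exists_measurable_partition_injOn {X Y : Type*} [TopologicalSpace X]
    [SecondCountableTopology X] [MeasurableSpace X] [OpensMeasurableSpace X]
    {Φ : X → Y} {S : Set X} (hS : MeasurableSet S)
    (hloc : ∀ z ∈ S, ∃ V, IsOpen V ∧ z ∈ V ∧ InjOn Φ V) :
    ∃ W : ℕ → Set X, (∀ n, MeasurableSet (W n)) ∧ Pairwise (Disjoint on W) ∧
      ⋃ n, W n = S ∧ ∀ n, InjOn Φ (W n) := by
  choose! V hVo hzV hVinj using hloc
  obtain ⟨t, htS, htc, hcov⟩ := TopologicalSpace.countable_cover_nhdsWithin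
    fun z hz => mem_nhdsWithin_of_mem_nhds ((hVo z hz).mem_nhds (hzV z hz))
  -- `∅` is added so that the family can be enumerated even when `S` is empty.
  obtain ⟨e, he⟩ := ((htc.image V).insert ∅).exists_eq_range (insert_nonempty _ _)
  have he_open : ∀ n, IsOpen (e n) ∧ InjOn Φ (e n) := by
    intro n
    rcases (he ▸ mem_range_self n : e n ∈ insert ∅ (V '' t)) with h0 | ⟨z, hz, hze⟩
    · exact h0 ▸ ⟨isOpen_empty, injOn_empty Φ⟩
    · exact hze ▸ ⟨hVo z (htS hz), hVinj z (htS hz)⟩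
  refine ⟨disjointed fun n => S ∩ e n, MeasurableSet.disjointed fun n =>
    hS.inter (he_open n).1.measurableSet, disjoint_disjointed _, ?_, fun n =>
    (he_open n).2.mono ((disjointed_subset _ n).trans inter_subset_right)⟩
  rw [iUnion_disjointed, ← inter_iUnion, inter_eq_left]
  intro z hz
  obtain ⟨x, hxt, hzx⟩ := mem_iUnion₂.1 (hcov hz)
  obtain ⟨n, hn⟩ : V x ∈ range e := he ▸ mem_insert_of_mem _ (mem_image_of_mem V hxt)
  exact mem_iUnion.2 ⟨n, hn ▸ hzx⟩

theorem HasStrictFDerivAt.exists_isOpen_injOn_of_det_ne_zero {E : Type*} [NormedAddCommGroup E]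
    [NormedSpace ℝ E] [FiniteDimensional ℝ E] {Φ : E → E} {Φ' : E →L[ℝ] E} {a : E}
    (hΦ : HasStrictFDerivAt Φ Φ' a) (hdet : Φ'.det ≠ 0) :
    ∃ V, IsOpen V ∧ a ∈ V ∧ InjOn Φ V := by
  have hΦe : HasStrictFDerivAt Φ (Φ'.toContinuousLinearEquivOfDetNeZero hdet : E →L[ℝ] E) a := by
    rwa [ContinuousLinearMap.coe_toContinuousLinearEquivOfDetNeZero]
  refine ⟨(hΦe.toOpenPartialHomeomorph Φ).source, (hΦe.toOpenPartialHomeomorph Φ).open_source,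
    hΦe.mem_toOpenPartialHomeomorph_source, ?_⟩
  simpa only [hΦe.toOpenPartialHomeomorph_coe] using (hΦe.toOpenPartialHomeomorph Φ).injOn

section ChangeOfVariables

variable {E F : Type*} [NormedAddCommGroup E] [NormedSpace ℝ E] [FiniteDimensional ℝ E]
  [MeasurableSpace E] [BorelSpace E] [NormedAddCommGroup F] [NormedSpace ℝ F]
  (μ : Measure E) [μ.IsAddHaarMeasure]

theorem integral_tsum_indicator_image_eq_integral_abs_det_fderiv_smul {Φ : E → E}
    {Φ' : E → E →L[ℝ] E} {W : ℕ → Set E} (hW : ∀ n, MeasurableSet (W n))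
    (hWd : Pairwise (Disjoint on W)) (hΦ' : ∀ n, ∀ z ∈ W n, HasFDerivWithinAt Φ (Φ' z) (W n) z)
    (hinj : ∀ n, InjOn Φ (W n)) {h : E → F}
    (hint : IntegrableOn (fun z => |(Φ' z).det| • h (Φ z)) (⋃ n, W n) μ) :
    ∫ y, ∑' n, (Φ '' W n).indicator h y ∂μ = ∫ z in ⋃ n, W n, |(Φ' z).det| • h (Φ z) ∂μ := by
  have himage : ∀ n, MeasurableSet (Φ '' W n) := fun n =>
    measurable_image_of_fderivWithin (hW n) (hΦ' n) (hinj n)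
  have hint_image : ∀ n, IntegrableOn h (Φ '' W n) μ := fun n =>
    (integrableOn_image_iff_integrableOn_abs_det_fderiv_smul μ (hW n) (hΦ' n) (hinj n) h).2
      (hint.mono_set (subset_iUnion W n))
  have hsum : ∑' n, ∫⁻ y, ‖(Φ '' W n).indicator h y‖ₑ ∂μ ≠ ⊤ := by
    have hpiece : ∀ n, ∫⁻ y, ‖(Φ '' W n).indicator h y‖ₑ ∂μ =
        ∫⁻ z in W n, ‖|(Φ' z).det| • h (Φ z)‖ₑ ∂μ := fun n => by
      simp only [enorm_indicator_eq_indicator_enorm, lintegral_indicator (himage n),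
        lintegral_image_eq_lintegral_abs_det_fderiv_mul μ (hW n) (hΦ' n) (hinj n), enorm_smul,
        Real.enorm_eq_ofReal_abs, abs_abs]
    rw [tsum_congr hpiece, ← lintegral_iUnion hW hWd]
    exact hint.2.ne
  calc ∫ y, ∑' n, (Φ '' W n).indicator h y ∂μ
      = ∑' n, ∫ y, (Φ '' W n).indicator h y ∂μ :=
        integral_tsum (fun n =>
          ((hint_image n).integrable_indicator (himage n)).aestronglyMeasurable) hsum
    _ = ∑' n, ∫ z in W n, |(Φ' z).det| • h (Φ z) ∂μ := tsum_congr fun n => by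
        rw [integral_indicator (himage n),
          integral_image_eq_integral_abs_det_fderiv_smul μ (hW n) (hΦ' n) (hinj n)]
    _ = ∫ z in ⋃ n, W n, |(Φ' z).det| • h (Φ z) ∂μ := (integral_iUnion hW hWd hint).symm

theorem integral_image_eq_integral_abs_det_fderiv_div_ncard_smul {U : Set E} (hU : IsOpen U)
    {Φ : E → E} (hΦ : ∀ z ∈ U, ContDiffAt ℝ 1 Φ z) (hfin : ∀ z ∈ U, (Φ ⁻¹' {Φ z} ∩ U).Finite)
    (g : E → F)
    (hint : IntegrableOn (fun z =>
      (|(fderiv ℝ Φ z).det| / (Φ ⁻¹' {Φ z} ∩ U).ncard) • g (Φ z)) U μ) :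
    ∫ y in Φ '' U, g y ∂μ =
      ∫ z in U, (|(fderiv ℝ Φ z).det| / (Φ ⁻¹' {Φ z} ∩ U).ncard) • g (Φ z) ∂μ := by
  set N : E → ℕ := fun y => (Φ ⁻¹' {y} ∩ U).ncard
  set h : E → F := fun y => (N y : ℝ)⁻¹ • g y
  have hGh : ∀ z, |(fderiv ℝ Φ z).det| • h (Φ z) =
      (|(fderiv ℝ Φ z).det| / N (Φ z)) • g (Φ z) := fun z => by
    rw [smul_smul, div_eq_mul_inv]
  have hΦ' : ∀ z ∈ U, HasFDerivAt Φ (fderiv ℝ Φ z) z := fun z hz =>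
    ((hΦ z hz).differentiableAt one_ne_zero).hasFDerivAt
  have hdet : Measurable fun z => (fderiv ℝ Φ z).det :=
    ContinuousLinearMap.continuous_det.measurable.comp (measurable_fderiv ℝ Φ)
  set S := U ∩ {z | (fderiv ℝ Φ z).det ≠ 0}
  set K := U ∩ {z | (fderiv ℝ Φ z).det = 0}
  have hSK : S ∪ K = U := by
    rw [← inter_union_distrib_left, ← compl_ofPred, compl_union_self, inter_univ]
  have hK : μ (Φ '' K) = 0 := addHaar_image_eq_zero_of_det_fderivWithin_eq_zero μ
    (fun z hz => (hΦ' z hz.1).hasFDerivWithinAt) fun z hz => hz.2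
  have hS : MeasurableSet S := hU.measurableSet.inter (hdet (measurableSet_singleton 0)).compl
  obtain ⟨W, hWm, hWd, hWS, hWinj⟩ := exists_measurable_partition_injOn hS fun z hz =>
      ((hΦ z hz.1).hasStrictFDerivAt one_ne_zero).exists_isOpen_injOn_of_det_ne_zero hz.2
  have hWU : ∀ n, W n ⊆ U := fun n => (subset_iUnion W n).trans (hWS ▸ inter_subset_left)
  have hWΦ' : ∀ n, ∀ z ∈ W n, HasFDerivWithinAt Φ (fderiv ℝ Φ z) (W n) z := fun n z hz =>
    (hΦ' z (hWU n hz)).hasFDerivWithinAt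
  have hpt : ∀ y ∉ Φ '' K, ∑' n, (Φ '' W n).indicator h y = (Φ '' U).indicator g y :=
    fun y hy => tsum_indicator_image_inv_ncard_smul hWd hWinj hWU hfin g fun z hz =>
      hWS ▸ ⟨hz.2, fun h0 => hy ⟨z, ⟨hz.2, h0⟩, hz.1⟩⟩
  have hΦU : NullMeasurableSet (Φ '' U) μ := by
    rw [← hSK, image_union, ← hWS, image_iUnion]
    exact (MeasurableSet.iUnion fun n => measurable_image_of_fderivWithin (hWm n) (hWΦ' n)
      (hWinj n)).nullMeasurableSet.union (.of_null hK)
  calc ∫ y in Φ '' U, g y ∂μ = ∫ y, (Φ '' U).indicator g y ∂μ := (integral_indicator₀ hΦU).symm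
    _ = ∫ y, ∑' n, (Φ '' W n).indicator h y ∂μ := integral_congr_ae
        ((measure_eq_zero_iff_ae_notMem.1 hK).mono fun y hy => (hpt y hy).symm)
    _ = ∫ z in ⋃ n, W n, |(fderiv ℝ Φ z).det| • h (Φ z) ∂μ :=
        integral_tsum_indicator_image_eq_integral_abs_det_fderiv_smul μ hWm hWd hWΦ' hWinj
          (by simpa only [hGh] using hint.mono_set (iUnion_subset hWU))
    _ = ∫ z in U, (|(fderiv ℝ Φ z).det| / N (Φ z)) • g (Φ z) ∂μ := by
        simp only [hGh, hWS]
        refine (setIntegral_eq_of_subset_of_forall_sdiff_eq_zero hU.measurableSet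
          inter_subset_left fun z hz => ?_).symm
        have h0 : (fderiv ℝ Φ z).det = 0 := not_not.1 fun h0 => hz.2 ⟨hz.1, h0⟩
        rw [h0, abs_zero, zero_div, zero_smul]

end ChangeOfVariables

theorem contDiffAt_rodrigues_mulVec {E : Type*} [NormedAddCommGroup E] [NormedSpace ℝ E]
    {r : WithTop ℕ∞} {n v : E → Fin 3 → ℝ} {a : E → ℝ} {z : E}
    (hn : ∀ i, ContDiffAt ℝ r (fun w => n w i) z) (ha : ContDiffAt ℝ r a z)
    (hv : ∀ i, ContDiffAt ℝ r (fun w => v w i) z) :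
    ContDiffAt ℝ r (fun w => rodrigues (n w) (a w) *ᵥ v w) z := by
  rw [contDiffAt_pi]
  intro i
  fin_cases i <;>
    simp only [mulVec, dotProduct, rodrigues, Fin.sum_univ_three, of_apply, cons_val',
      cons_val_fin_one, cons_val_zero, cons_val_one, cons_val, Fin.isValue, Fin.zero_eta,
      Fin.mk_one, Fin.reduceFinMk] <;>
    fun_prop

theorem contDiff_toE3 : ContDiff ℝ ⊤ toE3 := (EuclideanSpace.equiv (Fin 3) ℝ).symm.contDiff

theorem contDiffAt_rodrigues_mulVec_hemisphere {r : WithTop ℕ∞} {k₀ T : ℝ} {α : ℝ → ℝ}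
    {nv : ℝ → Fin 3 → ℝ} (hα : ContDiffOn ℝ r α (Icc 0 T))
    (hnv : ∀ i, ContDiffOn ℝ r (fun t => nv t i) (Icc 0 T)) {z : EuclideanSpace ℝ (Fin 3)}
    (hz : (z 0) ^ 2 + (z 1) ^ 2 < k₀ ^ 2) (hzT : z 2 ∈ Ioo 0 T) :
    ContDiffAt ℝ r (fun w : EuclideanSpace ℝ (Fin 3) => toE3 (rodrigues (nv (w 2)) (α (w 2)) *ᵥ
      ![w 0, w 1, Real.sqrt (k₀ ^ 2 - (w 0) ^ 2 - (w 1) ^ 2) - k₀])) z := by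
  have hT : Icc 0 T ∈ nhds (z 2) := Icc_mem_nhds hzT.1 hzT.2
  have hsqrt : ContDiffAt ℝ r (fun w : EuclideanSpace ℝ (Fin 3) =>
      Real.sqrt (k₀ ^ 2 - (w 0) ^ 2 - (w 1) ^ 2)) z :=
    ContDiffAt.sqrt (by fun_prop) (by nlinarith)
  have ht : ContDiffAt ℝ r (fun w : EuclideanSpace ℝ (Fin 3) => w 2) z := by fun_prop
  refine (contDiff_toE3.of_le le_top).contDiffAt.comp z (contDiffAt_rodrigues_mulVec
    (fun i => ((hnv i).contDiffAt hT).comp (g := fun t => nv t i) z ht)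
    ((hα.contDiffAt hT).comp z ht) fun i => ?_)
  fin_cases i <;>
    simp only [cons_val_zero, cons_val_one, cons_val, Fin.isValue, Fin.zero_eta, Fin.mk_one,
      Fin.reduceFinMk] <;>
    fun_prop

theorem stmt10_general (k₀ T : ℝ)
    (α : ℝ → ℝ) (nv : ℝ → Fin 3 → ℝ)
    (hα : ContDiffOn ℝ 1 α (Set.Icc (0 : ℝ) T))
    (hnv : ∀ i, ContDiffOn ℝ 1 (fun t => nv t i) (Set.Icc (0 : ℝ) T))
    -- the open parameter domain 𝒰 ⊆ ℝ³, with coordinates (k₁, k₂, t)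
    (U : Set (EuclideanSpace ℝ (Fin 3)))
    (hU : U = {z : EuclideanSpace ℝ (Fin 3) |
      (z 0) ^ 2 + (z 1) ^ 2 < k₀ ^ 2 ∧ z 2 ∈ Set.Ioo (0 : ℝ) T})
    -- the map Φ(k₁,k₂,t) = R(t) (k₁, k₂, κ(k₁,k₂) - k₀)ᵀ covering the k-space domain
    (Φ : EuclideanSpace ℝ (Fin 3) → EuclideanSpace ℝ (Fin 3))
    (hΦ : ∀ z : EuclideanSpace ℝ (Fin 3), Φ z = toE3 (rodrigues (nv (z 2)) (α (z 2)) *ᵥ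
      ![z 0, z 1, Real.sqrt (k₀ ^ 2 - (z 0) ^ 2 - (z 1) ^ 2) - k₀]))
    (hfin : ∀ z ∈ U, (Φ ⁻¹' {Φ z} ∩ U).Finite)
    (f : EuclideanSpace ℝ (Fin 3) → ℂ)
    (hint : IntegrableOn (fun z =>
      fourier3 f (Φ z) *
        ((|(fderiv ℝ Φ z).det| / ((Φ ⁻¹' {Φ z} ∩ U).ncard : ℝ) : ℝ) : ℂ)) U)
    (x : EuclideanSpace ℝ (Fin 3)) :
    ∫ y in Φ '' U, fourier3 f y * Complex.exp (Complex.I * ((inner ℝ x y : ℝ) : ℂ)) =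
      ∫ z in U, Complex.exp (Complex.I * ((inner ℝ (Φ z) x : ℝ) : ℂ)) * fourier3 f (Φ z) *
        ((|(fderiv ℝ Φ z).det| / ((Φ ⁻¹' {Φ z} ∩ U).ncard : ℝ) : ℝ) : ℂ) := by
  have hUo : IsOpen U := hU ▸
    (isOpen_lt (by fun_prop) (by fun_prop)).and (isOpen_Ioo.preimage (by fun_prop))
  have hΦC1 : ∀ z ∈ U, ContDiffAt ℝ 1 Φ z := fun z hz => by
    rw [hU] at hz
    exact funext hΦ ▸ contDiffAt_rodrigues_mulVec_hemisphere hα hnv hz.1 hz.2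
  have hwave : Continuous fun y : EuclideanSpace ℝ (Fin 3) =>
      Complex.exp (Complex.I * ((inner ℝ x y : ℝ) : ℂ)) := by fun_prop
  have hwave_norm : ∀ y, ‖Complex.exp (Complex.I * ((inner ℝ x y : ℝ) : ℂ))‖ ≤ 1 := fun y => by
    rw [mul_comm, Complex.norm_exp_ofReal_mul_I]
  have hint_wave := hint.bdd_mul ((hwave.comp_continuousOn fun z hz =>
    (hΦC1 z hz).continuousAt.continuousWithinAt).aestronglyMeasurable hUo.measurableSet)
    (.of_forall fun z => hwave_norm (Φ z))
  rw [integral_image_eq_integral_abs_det_fderiv_div_ncard_smul volume hUo hΦC1 hfin _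
    (hint_wave.congr (.of_forall fun z => by simp only [Function.comp, Complex.real_smul]; ring))]
  refine integral_congr_ae (.of_forall fun z => ?_)
  simp only [Complex.real_smul, real_inner_comm x]
  ring

theorem stmt10 (k₀ T : ℝ) (hk₀ : 0 < k₀) (hT : 0 < T)
    (α : ℝ → ℝ) (nv : ℝ → Fin 3 → ℝ)
    (hα : ContDiffOn ℝ 1 α (Set.Icc (0 : ℝ) T))
    (hnv : ∀ i, ContDiffOn ℝ 1 (fun t => nv t i) (Set.Icc (0 : ℝ) T))
    (hunit : ∀ t ∈ Set.Icc (0 : ℝ) T, (nv t 0) ^ 2 + (nv t 1) ^ 2 + (nv t 2) ^ 2 = 1)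
    -- the open parameter domain 𝒰 ⊆ ℝ³, with coordinates (k₁, k₂, t)
    (U : Set (EuclideanSpace ℝ (Fin 3)))
    (hU : U = {z : EuclideanSpace ℝ (Fin 3) |
      (z 0) ^ 2 + (z 1) ^ 2 < k₀ ^ 2 ∧ z 2 ∈ Set.Ioo (0 : ℝ) T})
    -- the map Φ(k₁,k₂,t) = R(t) (k₁, k₂, κ(k₁,k₂) - k₀)ᵀ covering the k-space domain
    (Φ : EuclideanSpace ℝ (Fin 3) → EuclideanSpace ℝ (Fin 3))
    (hΦ : ∀ z : EuclideanSpace ℝ (Fin 3), Φ z = toE3 (rodrigues (nv (z 2)) (α (z 2)) *ᵥ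
      ![z 0, z 1, Real.sqrt (k₀ ^ 2 - (z 0) ^ 2 - (z 1) ^ 2) - k₀]))
    (hfin : ∀ z ∈ U, (Φ ⁻¹' {Φ z} ∩ U).Finite)
    (f : EuclideanSpace ℝ (Fin 3) → ℂ) (hf : Integrable f)
    (hFint : IntegrableOn (fourier3 f) (Φ '' U))
    (hint : IntegrableOn (fun z =>
      fourier3 f (Φ z) *
        ((|(fderiv ℝ Φ z).det| / ((Φ ⁻¹' {Φ z} ∩ U).ncard : ℝ) : ℝ) : ℂ)) U)
    (x : EuclideanSpace ℝ (Fin 3)) :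
    ∫ y in Φ '' U, fourier3 f y * Complex.exp (Complex.I * ((inner ℝ x y : ℝ) : ℂ)) =
      ∫ z in U, Complex.exp (Complex.I * ((inner ℝ (Φ z) x : ℝ) : ℂ)) * fourier3 f (Φ z) *
        ((|(fderiv ℝ Φ z).det| / ((Φ ⁻¹' {Φ z} ∩ U).ncard : ℝ) : ℝ) : ℂ) :=
  stmt10_general k₀ T α nv hα hnv U hU Φ hΦ hfin f hint x
end
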